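/- Let n > 1 and let G ⊆ K_{n,n} be strictly totally ordered. Then the coefficient of G in the real multilinear polynomial of the dual function BPM*_n equals (−1)^{n+1}. -/

import Mathlib

/-!
The coefficients `a S` with `S ⊆ G` are determined, triangularly, by the values of `BPM*_n` on
the subsets of `G`. By the Frobenius–König theorem, `BPM*_n(T) = 1` exactly when `T` contains a
Hall violator, and the Hall violators inside a strictly totally ordered `G` are exactly the `n`
graphs `V k = K_{{σ 0, …, σ k}, N(σ k)}`. So on subsets of `G` the function `BPM*_n`
agrees with `1 - ∏ k, (1 - x^{V k})`, whose coefficient of `x^G` is the sum of `(-1)^(|I| + 1)`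
over the nonempty `I` with `⋃ k ∈ I, V k = G`. Since `V k` is the only violator containing an
edge from `σ k` to a neighbour of `σ k` outside `N(σ (k + 1))`, only `I = univ` qualifies,
which gives `(-1)^(n + 1)`.
-/

open Finset
open scoped Classical

/-- Edges of the complete bipartite graph `K_{n,n}` on labeled parts of size `n`. -/
abbrev Edge (n : ℕ) := Fin n × Fin n

/-- `M` is (the edge set of) a perfect matching of `K_{n,n}`. -/
def isPM {n : ℕ} (M : Finset (Edge n)) : Prop :=
  ∃ σ : Equiv.Perm (Fin n), M = Finset.univ.image fun i => (i, σ i)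

/-- `G` is matching-covered: its edge set is a (nonempty) union of perfect matchings. -/
def matchingCovered {n : ℕ} (G : Finset (Edge n)) : Prop :=
  ∃ S : Finset (Finset (Edge n)), S.Nonempty ∧ (∀ M ∈ S, isPM M) ∧ S.sup id = G

/-- `G` contains a perfect matching. -/
def hasPM {n : ℕ} (G : Finset (Edge n)) : Prop :=
  ∃ σ : Equiv.Perm (Fin n), ∀ i, (i, σ i) ∈ G

/-- The bipartite graph on the vertex set `Fin n ⊕ Fin n` with edge set `G`. -/
def graphOn {n : ℕ} (G : Finset (Edge n)) : SimpleGraph (Fin n ⊕ Fin n) :=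
  SimpleGraph.fromRel fun u v => ∃ e ∈ G, u = Sum.inl e.1 ∧ v = Sum.inr e.2

/-- The number of connected components of `G` (as a spanning subgraph of `K_{n,n}`). -/
noncomputable def numComponents {n : ℕ} (G : Finset (Edge n)) : ℕ :=
  Nat.card (graphOn G).ConnectedComponent

/-- The cyclomatic number `χ(G) = |E(G)| − |V(G)| + |C(G)|`. -/
noncomputable def cyclo {n : ℕ} (G : Finset (Edge n)) : ℤ :=
  (G.card : ℤ) + numComponents G - 2 * n

/-- `G` is elementary: a connected matching-covered graph. -/
def elementary {n : ℕ} (G : Finset (Edge n)) : Prop :=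
  matchingCovered G ∧ (graphOn G).Connected

/-- The bipartite perfect matching decision function, on inputs `x : Edge n → Bool`. -/
def BPMb (n : ℕ) (x : Edge n → Bool) : Prop :=
  ∃ σ : Equiv.Perm (Fin n), ∀ i, x (i, σ i) = true

/-- `H` is a Hall violator: a complete bipartite graph `K_{X,Y}` with `|X| + |Y| = n + 1`
(the remaining vertices isolated). -/
def HallViolator {n : ℕ} (H : Finset (Edge n)) : Prop :=
  ∃ X Y : Finset (Fin n), X.card + Y.card = n + 1 ∧ H = X ×ˢ Y

/-- `G` is covered by Hall violators: its edge set is a nonempty union of Hall violators. -/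
def HVCovered {n : ℕ} (G : Finset (Edge n)) : Prop :=
  ∃ S : Finset (Finset (Edge n)), S.Nonempty ∧ (∀ H ∈ S, HallViolator H) ∧ S.sup id = G

/-- The neighbourhood of a left vertex `a` in the bipartite graph `G`. -/
def nbhd {n : ℕ} (G : Finset (Edge n)) (a : Fin n) : Finset (Fin n) :=
  (G.filter fun e => e.1 = a).image Prod.snd

/-- `G` is totally ordered: its left vertices can be ordered so that their neighbourhoods
are nested, `N(a_1) ⊇ N(a_2) ⊇ … ⊇ N(a_n)`. -/
def totallyOrdered {n : ℕ} (G : Finset (Edge n)) : Prop :=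
  ∃ σ : Equiv.Perm (Fin n), ∀ i j : Fin n, i ≤ j → nbhd G (σ j) ⊆ nbhd G (σ i)

/-- `G` is strictly totally ordered:
`N(a_1) ⊋ N(a_2) ⊋ … ⊋ N(a_n) ⊋ ∅` for some ordering of the left vertices. -/
def strictlyTotallyOrdered {n : ℕ} (G : Finset (Edge n)) : Prop :=
  ∃ σ : Equiv.Perm (Fin n),
    (∀ i j : Fin n, i < j → nbhd G (σ j) ⊂ nbhd G (σ i)) ∧
    ∀ i : Fin n, (nbhd G (σ i)).Nonempty

theorem eq_of_forall_sum_powerset_eq {α M : Type*} [DecidableEq α] [AddCancelCommMonoid M]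
    {a c : Finset α → M} {G : Finset α}
    (h : ∀ T ⊆ G, ∑ S ∈ T.powerset, a S = ∑ S ∈ T.powerset, c S) : a G = c G := by
  induction G using Finset.strongInduction with
  | H G ih =>
    have hlower : ∀ S ∈ G.powerset.erase G, a S = c S := fun S hS =>
      ih S (ssubset_of_subset_of_ne (mem_powerset.1 (mem_of_mem_erase hS)) (ne_of_mem_erase hS))
        fun T hT => h T (hT.trans (mem_powerset.1 (mem_of_mem_erase hS)))
    have hG := h G subset_rfl
    rw [← add_sum_erase _ _ (mem_powerset_self G), ← add_sum_erase _ _ (mem_powerset_self G),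
      sum_congr rfl hlower] at hG
    exact add_right_cancel hG

theorem sum_powerset_neg_one_pow_card' {α R : Type*} [DecidableEq α] [Ring R]
    (s : Finset α) : ∑ t ∈ s.powerset, (-1 : R) ^ #t = if s = ∅ then 1 else 0 := by
  have := congrArg (Int.cast : ℤ → R) (sum_powerset_neg_one_pow_card (x := s))
  push_cast at this
  simpa [apply_ite (Int.cast : ℤ → R)] using this

theorem sum_mul_prod_boole {α R : Type*} [Fintype α] [DecidableEq α] [CommSemiring R]
    (a : Finset α → R) (T : Finset α) :
    ∑ S, a S * ∏ e ∈ S, (if e ∈ T then (1 : R) else 0) = ∑ S ∈ T.powerset, a S := by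
  simp_rw [prod_boole, mul_boole, ← subset_iff]
  rw [← sum_filter, filter_subset_univ]

theorem card_eq_sub_of_strictAnti {β : Type*} [Fintype β] {n : ℕ} (hβ : Fintype.card β ≤ n)
    {N : Fin n → Finset β} (hN : StrictAnti N) (hne : ∀ i, (N i).Nonempty) (i : Fin n) :
    #(N i) = n - i := by
  have hpos : ∀ i, 0 < #(N i) := fun i => (hne i).card_pos
  have hle : ∀ i, #(N i) ≤ n := fun i => (card_le_univ _).trans hβ
  have hmono : StrictMono fun i =>
      (⟨n - #(N i), by have := hpos i; have := i.isLt; omega⟩ : Fin n) := fun i j hij => by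
      have := card_lt_card (hN hij)
      have := hle i
      simp only [Fin.mk_lt_mk]
      omega
  have := congrArg Fin.val (congrFun hmono.eq_id i)
  dsimp only [id] at this
  have := hle i
  omega

theorem exists_mem_forall_mem_le_of_strictAnti {β : Type*} {n : ℕ} {N : Fin n → Finset β}
    (hN : StrictAnti N) (hne : ∀ i, (N i).Nonempty) (k : Fin n) :
    ∃ b ∈ N k, ∀ m, b ∈ N m → m ≤ k := by
  by_cases hk : IsMax k
  · obtain ⟨b, hb⟩ := hne k
    exact ⟨b, hb, fun m _ => not_lt.1 (hk.not_lt)⟩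
  · obtain ⟨b, hb, hb'⟩ := exists_of_ssubset (hN (Order.lt_succ_of_not_isMax hk))
    exact ⟨b, hb, fun m hm =>
      le_of_not_gt fun hkm => hb' (hN.antitone (Order.succ_le_of_lt hkm) hm)⟩

theorem exists_perm_forall_notMem_iff {β : Type*} [Fintype β] [DecidableEq β]
    (T : Finset (β × β)) :
    (∃ π : Equiv.Perm β, ∀ i, (i, π i) ∉ T) ↔
      ∀ X Y : Finset β, X ×ˢ Y ⊆ T → #X + #Y ≤ Fintype.card β := by
  constructor
  · rintro ⟨π, hπ⟩ X Y hXY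
    have hmaps : X.map π.toEmbedding ⊆ Yᶜ := by
      intro y hy
      obtain ⟨x, hx, rfl⟩ := mem_map.1 hy
      exact mem_compl.2 fun hxY => hπ x (hXY (mem_product.2 ⟨hx, hxY⟩))
    have := card_le_card hmaps
    rw [card_map, card_compl] at this
    have := card_le_univ Y
    omega
  · intro h
    -- Hall's condition: otherwise `X` and its non-neighbours would span a rectangle in `T`
    -- with too many vertices.
    obtain ⟨f, hf, hfT⟩ := (all_card_le_biUnion_card_iff_exists_injective
      fun i => ({b | (i, b) ∉ T} : Finset β)).1 fun X => by
        have := h X (X.biUnion fun i => {b | (i, b) ∉ T})ᶜ fun e he => by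
          by_contra heT
          exact (mem_compl.1 (mem_product.1 he).2)
            (mem_biUnion.2 ⟨e.1, (mem_product.1 he).1, by simpa using heT⟩)
        rw [card_compl] at this
        have := card_le_univ (X.biUnion fun i => ({b | (i, b) ∉ T} : Finset β))
        omega
    exact ⟨Equiv.ofBijective f hf.bijective_of_finite, fun i => by simpa using hfT i⟩

section UnionCoeff
variable {ι α : Type*} [Fintype ι] [DecidableEq ι] [DecidableEq α] (R : Type*) [Ring R]

/-- The coefficient of `x^S` in the multilinear expansion of `1 - ∏ k, (1 - ∏ e ∈ V k, x e)`. -/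
def unionCoeff (V : ι → Finset α) (S : Finset α) : R :=
  ∑ I : Finset ι with I.Nonempty ∧ I.sup V = S, (-1) ^ (#I + 1)

theorem sum_powerset_unionCoeff (V : ι → Finset α) (T : Finset α) :
    ∑ S ∈ T.powerset, unionCoeff R V S = if ∃ k, V k ⊆ T then 1 else 0 := by
  set K : Finset ι := {k | V k ⊆ T}
  have hK : ∀ I : Finset ι, I ⊆ K ↔ I.sup V ⊆ T := fun I => by
    simp [K, subset_iff, Finset.sup_le_iff]
  calc ∑ S ∈ T.powerset, unionCoeff R V S
      = ∑ I ∈ K.powerset.erase ∅, (-1 : R) ^ (#I + 1) := by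
        rw [← sum_fiberwise_of_maps_to (g := fun I => I.sup V) (t := T.powerset)
          fun I hI => mem_powerset.2 ((hK I).1 (mem_powerset.1 (mem_of_mem_erase hI)))]
        refine sum_congr rfl fun S hS => sum_congr ?_ fun _ _ => rfl
        ext I
        simp only [mem_filter, mem_univ, true_and, mem_erase, mem_powerset, hK,
          nonempty_iff_ne_empty]
        constructor
        · rintro ⟨hI, rfl⟩
          exact ⟨⟨hI, mem_powerset.1 hS⟩, rfl⟩
        · rintro ⟨⟨hI, -⟩, rfl⟩
          exact ⟨hI, rfl⟩
    _ = 1 - ∑ I ∈ K.powerset, (-1 : R) ^ #I := by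
        rw [sum_erase_eq_sub (empty_mem_powerset K)]
        simp only [pow_succ, mul_neg, mul_one, sum_neg_distrib, card_empty, zero_add, pow_zero,
          sub_neg_eq_add]
        abel
    _ = if ∃ k, V k ⊆ T then 1 else 0 := by
        rw [sum_powerset_neg_one_pow_card']
        by_cases h : ∃ k, V k ⊆ T
        · obtain ⟨k, hk⟩ := h
          rw [if_neg (ne_empty_of_mem (s := K) (by simpa [K] using hk)), if_pos ⟨k, hk⟩, sub_zero]
        · rw [if_pos (by ext k; simpa [K] using fun hk => h ⟨k, hk⟩), if_neg h, sub_self]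

theorem unionCoeff_eq_of_sup_eq_iff [Nonempty ι] {V : ι → Finset α} {G : Finset α}
    (hV : ∀ I : Finset ι, I.sup V = G ↔ I = univ) :
    unionCoeff R V G = (-1) ^ (Fintype.card ι + 1) := by
  have : ({I | I.Nonempty ∧ I.sup V = G} : Finset (Finset ι)) = {univ} := by
    ext I
    simp only [hV, mem_filter, mem_univ, true_and, mem_singleton, and_iff_right_iff_imp]
    rintro rfl
    exact univ_nonempty
  rw [unionCoeff, this, sum_singleton, card_univ]

end UnionCoeff

section Chain
variable {n : ℕ} {G : Finset (Edge n)} {σ : Equiv.Perm (Fin n)}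

@[simp]
theorem mem_nbhd {a b : Fin n} : b ∈ nbhd G a ↔ (a, b) ∈ G := by
  simp [nbhd]

/-- For `N(σ 0) ⊋ N(σ 1) ⊋ ⋯`, the paper's Hall violator `K_{{a_{n-k},…,a_n},{b_1,…,b_{n-k}}}`,
where `a_{n-j} = σ j`. -/
def chainViolator (G : Finset (Edge n)) (σ : Equiv.Perm (Fin n)) (k : Fin n) : Finset (Edge n) :=
  (Iic k).map σ.toEmbedding ×ˢ nbhd G (σ k)

theorem mem_chainViolator {k : Fin n} {e : Edge n} :
    e ∈ chainViolator G σ k ↔ σ.symm e.1 ≤ k ∧ (σ k, e.2) ∈ G := by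
  simp [chainViolator, mem_map_equiv]

theorem chainViolator_subset (hN : Antitone fun i => nbhd G (σ i)) (k : Fin n) :
    chainViolator G σ k ⊆ G := by
  intro e he
  rw [mem_chainViolator] at he
  simpa using hN he.1 (mem_nbhd.2 he.2)

theorem card_map_Iic_add_card_nbhd (hN : StrictAnti fun i => nbhd G (σ i))
    (hne : ∀ i, (nbhd G (σ i)).Nonempty) (k : Fin n) :
    #((Iic k).map σ.toEmbedding) + #(nbhd G (σ k)) = n + 1 := by
  rw [card_map, Fin.card_Iic, card_eq_sub_of_strictAnti (by simp) hN hne]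
  omega

theorem sup_chainViolator_eq_iff (hN : StrictAnti fun i => nbhd G (σ i))
    (hne : ∀ i, (nbhd G (σ i)).Nonempty) (I : Finset (Fin n)) :
    I.sup (chainViolator G σ) = G ↔ I = univ := by
  constructor
  · intro hI
    refine eq_univ_of_forall fun k => ?_
    obtain ⟨b, hb, hbmax⟩ := exists_mem_forall_mem_le_of_strictAnti hN hne k
    have hkb : (σ k, b) ∈ I.sup (chainViolator G σ) := by rw [hI]; exact mem_nbhd.1 hb
    obtain ⟨m, hm, hkm⟩ := mem_sup.1 hkb
    rw [mem_chainViolator] at hkm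
    simp only [Equiv.symm_apply_apply] at hkm
    exact le_antisymm (hbmax m (mem_nbhd.2 hkm.2)) hkm.1 ▸ hm
  · rintro rfl
    refine (Finset.sup_le fun k _ => chainViolator_subset hN.antitone k).antisymm fun e he => ?_
    exact mem_sup.2 ⟨σ.symm e.1, mem_univ _, mem_chainViolator.2 ⟨le_rfl, by simpa using he⟩⟩

theorem exists_chainViolator_eq_of_product_subset (hN : StrictAnti fun i => nbhd G (σ i))
    (hne : ∀ i, (nbhd G (σ i)).Nonempty) {X Y : Finset (Fin n)} (hXY : X ×ˢ Y ⊆ G)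
    (hcard : n < #X + #Y) : ∃ k, chainViolator G σ k = X ×ˢ Y := by
  have hX : (X.map σ.symm.toEmbedding).Nonempty := by
    have := card_le_univ Y
    rw [Fintype.card_fin] at this
    exact (card_pos.1 (by omega)).map
  set m := (X.map σ.symm.toEmbedding).max' hX
  have hXm : X ⊆ (Iic m).map σ.toEmbedding := fun x hx => by
    simpa [mem_map_equiv] using le_max' _ _ (mem_map_equiv.2 (by simpa using hx))
  have hYm : Y ⊆ nbhd G (σ m) := fun y hy => by
    have hmX : σ m ∈ X := by simpa [mem_map_equiv] using max'_mem _ hX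
    exact mem_nbhd.2 (hXY (mem_product.2 ⟨hmX, hy⟩))
  have := card_map_Iic_add_card_nbhd hN hne m
  have := card_le_card hXm
  have := card_le_card hYm
  refine ⟨m, ?_⟩
  rw [chainViolator, eq_of_subset_of_card_le hXm (by omega), eq_of_subset_of_card_le hYm (by omega)]

theorem exists_chainViolator_subset_iff (hN : StrictAnti fun i => nbhd G (σ i))
    (hne : ∀ i, (nbhd G (σ i)).Nonempty) {T : Finset (Edge n)} (hT : T ⊆ G) :
    (∃ k, chainViolator G σ k ⊆ T) ↔ ∃ X Y : Finset (Fin n), X ×ˢ Y ⊆ T ∧ n < #X + #Y := by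
  constructor
  · rintro ⟨k, hk⟩
    exact ⟨_, _, hk, by rw [card_map_Iic_add_card_nbhd hN hne k]; omega⟩
  · rintro ⟨X, Y, hXY, hcard⟩
    obtain ⟨k, hk⟩ := exists_chainViolator_eq_of_product_subset hN hne (hXY.trans hT) hcard
    exact ⟨k, hk ▸ hXY⟩

end Chain

/-- for `n > 1`, every strictly totally ordered `G ⊆ K_{n,n}` has coefficient
`(−1)^{n+1}` in the unique real multilinear polynomial representing the dual function
`BPM*_n(x) = 1 − BPM_n(1−x)`. -/
theorem stmt18 (n : ℕ) (hn : 1 < n) (a : Finset (Edge n) → ℝ)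
    (ha : ∀ x : Edge n → Bool,
      (∑ S : Finset (Edge n), a S * ∏ e ∈ S, (if x e then (1 : ℝ) else 0))
        = (if BPMb n (fun e => ! x e) then 0 else 1))
    (G : Finset (Edge n)) (hG : strictlyTotallyOrdered G) :
    a G = (-1 : ℝ) ^ (n + 1) := by
  obtain ⟨σ, hN : StrictAnti fun i => nbhd G (σ i), hne⟩ := hG
  have : Nonempty (Fin n) := ⟨⟨0, by omega⟩⟩
  have hsum : ∀ T ⊆ G,
      ∑ S ∈ T.powerset, a S = ∑ S ∈ T.powerset, unionCoeff ℝ (chainViolator G σ) S := by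
    intro T hT
    have hBPM : BPMb n (fun e => !decide (e ∈ T)) ↔ ¬ ∃ k, chainViolator G σ k ⊆ T := by
      rw [exists_chainViolator_subset_iff hN hne hT]
      simpa [BPMb] using exists_perm_forall_notMem_iff T
    have hvalue := ha fun e => decide (e ∈ T)
    simp only [decide_eq_true_eq, sum_mul_prod_boole, hBPM] at hvalue
    rw [hvalue, sum_powerset_unionCoeff, ite_not]
    congr
  rw [eq_of_forall_sum_powerset_eq hsum,
    unionCoeff_eq_of_sup_eq_iff ℝ (sup_chainViolator_eq_iff hN hne), Fintype.card_fin]
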